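/- Let G be a directed mixed graph, X a vertex with no outgoing directed edges (after mutilation), and A a set of vertices such that every directed parent of X lies in A, and no vertex bidirected-adjacent to X is an ancestor of any vertex of Z ∪ A, where Z is disjoint from A ∪ {X}. Then every path from X to a vertex of Z is blocked by A. -/
import Mathlib


structure MixedGraph (V : Type*) where
  dir : V → V → Prop
  bi : V → V → Prop

namespace MixedGraph

variable {V : Type*}

/-- Edge orientation along a path step: `fwd` = u → v, `back` = u ← v, `both` = u ↔ v. -/
inductive EdgeDir | fwd | back | both
deriving DecidableEq

/-- The step from `u` to `v` is realized by an edge of the given orientation. -/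
def stepOK (G : MixedGraph V) : EdgeDir → V → V → Prop
  | .fwd, u, v => G.dir u v
  | .back, u, v => G.dir v u
  | .both, u, v => G.bi u v

/-- The step has an arrowhead at its target end. -/
def headAtTarget : EdgeDir → Prop
  | .fwd => True
  | .back => False
  | .both => True

/-- The step has an arrowhead at its source end. -/
def headAtSource : EdgeDir → Prop
  | .fwd => False
  | .back => True
  | .both => True

/-- A path in a mixed graph: a sequence of distinct vertices joined by edges. -/
structure Path (G : MixedGraph V) (n : ℕ) where
  verts : Fin (n + 1) → V
  edges : Fin n → EdgeDir
  inj : Function.Injective verts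
  ok : ∀ i : Fin n, G.stepOK (edges i) (verts i.castSucc) (verts i.succ)

/-- The internal vertex at position `i` of the path is a collider: both adjacent
path edges have an arrowhead at it. -/
def Path.collider {G : MixedGraph V} {n : ℕ} (p : Path G n) (i : ℕ) : Prop :=
  ∃ (_h0 : 0 < i) (hn : i < n),
    headAtTarget (p.edges ⟨i - 1, by omega⟩) ∧ headAtSource (p.edges ⟨i, hn⟩)

/-- `v` is a descendant of `u` (via a directed path, reflexively). -/
def descendant (G : MixedGraph V) (u v : V) : Prop :=
  Relation.ReflTransGen G.dir u v

/-- A path is blocked by `S`: some internal non-collider is in `S`, or some collider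
has no descendant (including itself) in `S`. -/
def Path.blockedBy {G : MixedGraph V} {n : ℕ} (p : Path G n) (S : Set V) : Prop :=
  (∃ i, ∃ _h0 : 0 < i, ∃ _hn : i < n,
      ¬ p.collider i ∧ p.verts ⟨i, by omega⟩ ∈ S) ∨
  (∃ i, ∃ _hn : i < n,
      p.collider i ∧ ∀ d, descendant G (p.verts ⟨i, by omega⟩) d → d ∉ S)

/-- `A` is d-separated from `B` by `S` in `G`. -/
def dsep (G : MixedGraph V) (A B S : Set V) : Prop :=
  ∀ (n : ℕ) (p : Path G n), p.verts 0 ∈ A → p.verts (Fin.last n) ∈ B → p.blockedBy S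

/-- Directed parents of a vertex. -/
def parents (G : MixedGraph V) (y : V) : Set V := {w | G.dir w y}

/-- Mutilated graph `G_{\underline{P}}`: all directed edges out of `P` removed. -/
def mutUnder (G : MixedGraph V) (P : Set V) : MixedGraph V :=
  ⟨fun u v => G.dir u v ∧ u ∉ P, G.bi⟩

/-- Mutilated graph `G_{\overline{Z}}`: all directed edges into `Z` removed. -/
def mutOver (G : MixedGraph V) (Z : Set V) : MixedGraph V :=
  ⟨fun u v => G.dir u v ∧ v ∉ Z, G.bi⟩

end MixedGraph

/-- Directed edge of the summary causal graph of a full-time graph. -/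
def summaryDir {I : Type*} (G : MixedGraph (I × ℤ)) (a b : I) : Prop :=
  ∃ s t : ℤ, G.dir (a, s) (b, t)

/-- Bidirected edge of the summary causal graph of a full-time graph. -/
def summaryBi {I : Type*} (G : MixedGraph (I × ℤ)) (a b : I) : Prop :=
  ∃ s t : ℤ, G.bi (a, s) (b, t)

/-- Possible parents of `Y_t` given summary directed edges `S` and maximal lag `γmax`. -/
def PP {I : Type*} (S : I → I → Prop) (γmax : ℕ) (Y : I) (t : ℤ) : Set (I × ℤ) :=
  {v | (v.1 ≠ Y ∧ S v.1 Y ∧ ∃ γ : ℕ, γ ≤ γmax ∧ v.2 = t - γ) ∨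
       (v.1 = Y ∧ S Y Y ∧ ∃ γ : ℕ, 0 < γ ∧ γ ≤ γmax ∧ v.2 = t - γ)}

/-- if `x` has no outgoing directed edges, all directed parents of `x`
lie in `A`, no bidirected neighbor of `x` is an ancestor of a vertex of `Z ∪ A`,
`Z` is disjoint from `A ∪ {x}`, and no vertex of `Z` is adjacent to `x`, then every
path from `x` to `Z` is blocked by `A`. -/
theorem stmt9 {V : Type*} (G : MixedGraph V) (x : V) (A Z : Set V)
    (hout : ∀ v, ¬ G.dir x v)
    (hpar : G.parents x ⊆ A)
    (hbisymm : ∀ u v, G.bi u v → G.bi v u)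
    (hbi : ∀ u, G.bi u x → ∀ w ∈ Z ∪ A, ¬ G.descendant u w)
    (hdisj : Disjoint Z (A ∪ {x}))
    (hadj : ∀ z ∈ Z, ¬ G.dir z x ∧ ¬ G.dir x z ∧ ¬ G.bi z x ∧ ¬ G.bi x z) :
    MixedGraph.dsep G {x} Z A := by
  classical
  intro n p hx hz
  simp only [Set.mem_singleton_iff] at hx
  have hokk : ∀ (k : ℕ) (h : k < n),
      G.stepOK (p.edges ⟨k, h⟩) (p.verts ⟨k, by omega⟩) (p.verts ⟨k + 1, by omega⟩) :=
    fun k h => p.ok ⟨k, h⟩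
  rcases lt_or_ge n 2 with hn | hn
  · interval_cases n
    · -- n = 0
      have hxZ : x ∈ Z := by rw [← hx]; exact hz
      exact absurd (Set.mem_union_right A rfl) (Set.disjoint_left.mp hdisj hxZ)
    · -- n = 1
      have hok := hokk 0 (by omega)
      have hv0 : p.verts ⟨0, by omega⟩ = x := hx
      have hv1 : p.verts ⟨1, by omega⟩ = p.verts (Fin.last 1) := rfl
      obtain ⟨h1, h2, h3, h4⟩ := hadj _ hz
      cases he : p.edges ⟨0, by omega⟩ <;> rw [he] at hok <;>
        rw [hv0, hv1] at hok
      · exact absurd hok h2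
      · exact absurd hok h1
      · exact absurd hok h4
  · -- n ≥ 2
    have hok0 := hokk 0 (by omega)
    have hv0 : p.verts ⟨0, by omega⟩ = x := hx
    cases he0 : p.edges ⟨0, by omega⟩
    case fwd =>
      rw [he0, hv0] at hok0
      exact absurd hok0 (hout _)
    case back =>
      rw [he0, hv0] at hok0
      left
      refine ⟨1, one_pos, by omega, ?_, hpar hok0⟩
      intro hc
      unfold MixedGraph.Path.collider at hc
      obtain ⟨h0x, hn1, hhead, hsx⟩ := hc
      have he0' : p.edges ⟨1 - 1, by omega⟩ = MixedGraph.EdgeDir.back := he0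
      rw [he0'] at hhead
      exact hhead
    case both =>
      rw [he0, hv0] at hok0
      have hbv1 : G.bi (p.verts ⟨1, by omega⟩) x := hbisymm _ _ hok0
      -- prefix descendant lemma
      have pre : ∀ k (hk : k < n + 1) (_hk1 : 1 ≤ k),
          (∀ i (hi : i < k) (_h1 : 1 ≤ i), p.edges ⟨i, by omega⟩ = MixedGraph.EdgeDir.fwd) →
          Relation.ReflTransGen G.dir (p.verts ⟨1, by omega⟩) (p.verts ⟨k, hk⟩) := by
        intro k
        induction k with
        | zero => omega
        | succ m ih =>
          intro hk hk1 hall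
          by_cases hm : m = 0
          · subst hm
            exact Relation.ReflTransGen.refl
          · have hm1 : 1 ≤ m := by omega
            have ho := hokk m (by omega)
            rw [hall m (Nat.lt_succ_self m) hm1] at ho
            exact (ih (by omega) hm1 (fun i hi h1 => hall i (by omega) h1)).tail ho
      by_cases hall : ∀ i (hi : i < n) (_h1 : 1 ≤ i), p.edges ⟨i, hi⟩ = MixedGraph.EdgeDir.fwd
      · -- all forward: v1 is an ancestor of z ∈ Z, contradiction
        have hd := pre n (by omega) (by omega) (fun i hi _h1 => hall i hi _h1)
        have hzz : p.verts ⟨n, by omega⟩ ∈ Z := hz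
        exact absurd hd (hbi _ hbv1 _ (Set.mem_union_left A hzz))
      · push_neg at hall
        have hQ : ∃ j, ∃ hj : j < n, 1 ≤ j ∧ p.edges ⟨j, hj⟩ ≠ MixedGraph.EdgeDir.fwd := by
          obtain ⟨i, hi, h1, hne⟩ := hall
          exact ⟨i, hi, h1, hne⟩
        obtain ⟨hjn, hj1, hjne⟩ := Nat.find_spec hQ
        set j := Nat.find hQ with hjdef
        have hmin : ∀ i (hi : i < j) (_h1 : 1 ≤ i),
            p.edges ⟨i, by omega⟩ = MixedGraph.EdgeDir.fwd := by
          intro i hi h1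
          by_contra hne
          exact Nat.find_min hQ hi ⟨by omega, h1, hne⟩
        have hdj : Relation.ReflTransGen G.dir (p.verts ⟨1, by omega⟩)
            (p.verts ⟨j, by omega⟩) := pre j (by omega) hj1 (fun i hi h1 => hmin i hi h1)
        right
        refine ⟨j, hjn, ⟨by omega, hjn, ?_, ?_⟩, ?_⟩
        · -- headAtTarget at edge j-1
          by_cases hj : j = 1
          · have h : p.edges ⟨j - 1, by omega⟩ = MixedGraph.EdgeDir.both := by
              have hj0 : j - 1 = 0 := by omega
              rw [show (⟨j - 1, by omega⟩ : Fin n) = ⟨0, by omega⟩ from Fin.ext hj0]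
              exact he0
            rw [h]; trivial
          · have h : p.edges ⟨j - 1, by omega⟩ = MixedGraph.EdgeDir.fwd :=
              hmin (j - 1) (by omega) (by omega)
            rw [h]; trivial
        · -- headAtSource at edge j
          cases hej : p.edges ⟨j, hjn⟩
          · exact absurd hej hjne
          · trivial
          · trivial
        · intro d hd hdA
          exact hbi _ hbv1 d (Set.mem_union_right Z hdA) (hdj.trans hd)
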